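/- Let a > 0 and s > 0 be real numbers, and define f(β) = Φ((−a+β)/s) + Φ((−a−β)/s), where Φ is the standard normal CDF. Then f is strictly increasing on (0, ∞) and strictly decreasing on (−∞, 0); consequently f attains its unique global minimum at β = 0. -/

import Mathlib

/-!
Φ' = φ, so f'(β) = (φ((β - a)/s) - φ((β + a)/s))/s. For β > 0 and a > 0 we have
|β - a| < β + a, and φ decreases in |x|, hence f' > 0 on (0, ∞). Since φ is even,
f(-β) = f(β), which gives the behaviour on (-∞, 0) and the unique minimum at 0.
-/

noncomputable def stdNormalCDF (x : ℝ) : ℝ :=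
  ∫ t in Set.Iic x, Real.exp (-t ^ 2 / 2) / Real.sqrt (2 * Real.pi)

open Set

noncomputable def stdNormalPDF (t : ℝ) : ℝ := Real.exp (-t ^ 2 / 2) / Real.sqrt (2 * Real.pi)

noncomputable def selectionProb (a s β : ℝ) : ℝ :=
  stdNormalCDF ((-a + β) / s) + stdNormalCDF ((-a - β) / s)

lemma continuous_stdNormalPDF : Continuous stdNormalPDF := by
  unfold stdNormalPDF
  fun_prop

lemma integrable_stdNormalPDF : MeasureTheory.Integrable stdNormalPDF := by
  convert (integrable_exp_neg_mul_sq (by norm_num : (0 : ℝ) < 1 / 2)).div_const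
    (Real.sqrt (2 * Real.pi)) using 2 with t
  unfold stdNormalPDF
  ring_nf

lemma stdNormalPDF_lt_of_sq_lt {u v : ℝ} (h : u ^ 2 < v ^ 2) :
    stdNormalPDF v < stdNormalPDF u := by
  unfold stdNormalPDF
  gcongr

lemma stdNormalCDF_eq_integral (x : ℝ) : stdNormalCDF x = ∫ t in Iic x, stdNormalPDF t := rfl

lemma hasDerivAt_stdNormalCDF (x : ℝ) : HasDerivAt stdNormalCDF (stdNormalPDF x) x := by
  have hsplit : stdNormalCDF = fun y => stdNormalCDF 0 + ∫ t in (0 : ℝ)..y, stdNormalPDF t := by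
    funext y
    rw [stdNormalCDF_eq_integral, stdNormalCDF_eq_integral,
      ← intervalIntegral.integral_Iic_sub_Iic integrable_stdNormalPDF.integrableOn
        integrable_stdNormalPDF.integrableOn]
    ring
  rw [hsplit]
  exact (intervalIntegral.integral_hasDerivAt_right integrable_stdNormalPDF.intervalIntegrable
    continuous_stdNormalPDF.stronglyMeasurable.stronglyMeasurableAtFilter
    continuous_stdNormalPDF.continuousAt).const_add _

lemma selectionProb_neg (a s β : ℝ) : selectionProb a s (-β) = selectionProb a s β := by
  simp only [selectionProb, sub_neg_eq_add, ← sub_eq_add_neg, add_comm]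

lemma hasDerivAt_selectionProb (a s β : ℝ) :
    HasDerivAt (selectionProb a s)
      ((stdNormalPDF ((-a + β) / s) - stdNormalPDF ((-a - β) / s)) / s) β := by
  have hplus := (hasDerivAt_stdNormalCDF _).comp β
    (((hasDerivAt_id β).const_add (-a)).div_const s)
  have hminus := (hasDerivAt_stdNormalCDF _).comp β
    (((hasDerivAt_id β).const_sub (-a)).div_const s)
  refine (hplus.add hminus).congr_deriv ?_
  simp only [id]
  ring

lemma strictMonoOn_selectionProb {a s : ℝ} (ha : 0 < a) (hs : 0 < s) :
    StrictMonoOn (selectionProb a s) (Ici 0) := by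
  refine strictMonoOn_of_deriv_pos (convex_Ici 0)
    (fun β _ => (hasDerivAt_selectionProb a s β).continuousAt.continuousWithinAt)
    fun β hβ => ?_
  rw [interior_Ici, mem_Ioi] at hβ
  rw [(hasDerivAt_selectionProb a s β).deriv]
  have hsq : ((-a + β) / s) ^ 2 < ((-a - β) / s) ^ 2 := by
    rw [div_pow, div_pow]
    exact (div_lt_div_iff_of_pos_right (by positivity)).mpr (by nlinarith)
  exact div_pos (sub_pos.mpr (stdNormalPDF_lt_of_sq_lt hsq)) hs

lemma Function.Even.strictAntiOn_Iio {f : ℝ → ℝ} (hf : f.Even)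
    (hmono : StrictMonoOn f (Ici 0)) : StrictAntiOn f (Iio 0) := by
  intro x hx y hy hxy
  rw [← hf x, ← hf y]
  exact hmono (mem_Ici.mpr (neg_nonneg.mpr hy.le)) (mem_Ici.mpr (neg_nonneg.mpr hx.le))
    (neg_lt_neg hxy)

lemma Function.Even.lt_of_ne_zero {f : ℝ → ℝ} (hf : f.Even) (hmono : StrictMonoOn f (Ici 0))
    {β : ℝ} (hβ : β ≠ 0) : f 0 < f β := by
  have h := hmono self_mem_Ici (abs_nonneg β) (abs_pos.mpr hβ)
  rcases abs_choice β with hβ' | hβ' <;> rw [hβ'] at h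
  · exact h
  · rwa [hf] at h

theorem stmt_1 (a s : ℝ) (ha : 0 < a) (hs : 0 < s)
    (f : ℝ → ℝ)
    (hf : ∀ β, f β = stdNormalCDF ((-a + β) / s) + stdNormalCDF ((-a - β) / s)) :
    StrictMonoOn f (Set.Ioi (0 : ℝ)) ∧ StrictAntiOn f (Set.Iio (0 : ℝ)) ∧
      ∀ β : ℝ, β ≠ 0 → f 0 < f β := by
  obtain rfl : f = selectionProb a s := funext hf
  have heven : (selectionProb a s).Even := selectionProb_neg a s
  have hmono := strictMonoOn_selectionProb ha hs
  exact ⟨hmono.mono Ioi_subset_Ici_self, heven.strictAntiOn_Iio hmono,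
    fun _ => heven.lt_of_ne_zero hmono⟩
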